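/- Let R be a commutative Noetherian local ring with m-adic completion R̂. A finitely generated R-module M is free on the punctured spectrum of R (i.e., M_p is R_p-free for every nonmaximal prime p) if and only if the completion M̂ = M ⊗_R R̂ is free on the punctured spectrum of R̂. -/

import Mathlib

/-!
For a flat `R`-algebra `A`, a finite `R`-module `M` and `q ∈ Spec A` lying over `p`, the module
`(A ⊗ M)_q` is free iff `M_p` is: one direction is base change; for the other, `R_p → A_q` is a
flat local homomorphism, hence faithfully flat, so `M_p` is flat by descent, and a finite flat
module over a local ring is free. The completion `R → R̂` is flat and local with `m R̂ = m̂`, so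
`Spec R̂ → Spec R` is surjective and a prime of `R̂` is maximal iff its contraction is; hence the
punctured spectra correspond.
-/

open IsLocalRing

noncomputable section

/-- A module is free on the punctured spectrum if its localization at every
nonmaximal prime is free. -/
def FreeOnPuncturedSpectrum (A : Type) [CommRing A] (N : Type)
    [AddCommGroup N] [Module A N] : Prop :=
  ∀ q : PrimeSpectrum A, ¬ q.asIdeal.IsMaximal →
    Module.Free (Localization.AtPrime q.asIdeal)
      (LocalizedModule q.asIdeal.primeCompl N)

open TensorProduct PrimeSpectrum

namespace Module

variable {R A M : Type*} [CommRing R] [CommRing A] [Algebra R A] [Flat R A]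
  [AddCommGroup M] [Module R M] [Module.Finite R M]

lemma preimage_comap_freeLocus_of_flat :
    comap (algebraMap R A) ⁻¹' freeLocus R M = freeLocus A (A ⊗[R] M) := by
  refine le_antisymm comap_freeLocus_le fun q hq ↦ ?_
  let p := comap (algebraMap R A) q
  let Rₚ := Localization.AtPrime p.asIdeal
  let Aₚ := Localization.AtPrime q.asIdeal
  algebraize [Localization.localRingHom p.asIdeal q.asIdeal (algebraMap R A) rfl]
  have : IsScalarTower R Rₚ Aₚ := .of_algebraMap_eq fun x ↦
    (Localization.localRingHom_to_map _ _ _ rfl x).symm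
  have : Flat Rₚ Aₚ :=
    RingHom.Flat.localRingHom (RingHom.flat_algebraMap_iff.mpr ‹_›) q.asIdeal p.asIdeal rfl
  have : FaithfullyFlat Rₚ Aₚ := .of_flat_of_isLocalHom
  rw [Set.mem_preimage, mem_freeLocus_iff_tensor _ Rₚ]
  rw [mem_freeLocus_iff_tensor _ Aₚ] at hq
  have : Free Aₚ (Aₚ ⊗[Rₚ] (Rₚ ⊗[R] M)) := .of_equiv
    (AlgebraTensorModule.cancelBaseChange R A Aₚ Aₚ M ≪≫ₗ
      (AlgebraTensorModule.cancelBaseChange R Rₚ Aₚ Aₚ M).symm)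
  have : Flat Rₚ (Rₚ ⊗[R] M) := .of_flat_tensorProduct Rₚ _ Aₚ
  exact free_of_flat_of_isLocalRing

end Module

namespace IsLocalRing

variable {R S : Type*} [CommRing R] [CommRing S] [IsLocalRing R] [IsLocalRing S]
  [Algebra R S] [IsLocalHom (algebraMap R S)]

lemma isMaximal_comap_iff_of_map_maximalIdeal
    (h : (maximalIdeal R).map (algebraMap R S) = maximalIdeal S) (q : PrimeSpectrum S) :
    (comap (algebraMap R S) q).asIdeal.IsMaximal ↔ q.asIdeal.IsMaximal := by
  refine ⟨fun hp ↦ ?_, fun hq ↦ ?_⟩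
  · have hle : maximalIdeal S ≤ q.asIdeal := by
      rw [← h, Ideal.map_le_iff_le_comap]
      exact (eq_maximalIdeal hp).ge
    rw [le_antisymm (le_maximalIdeal q.isPrime.ne_top) hle]
    infer_instance
  · rw [PrimeSpectrum.comap_asIdeal, eq_maximalIdeal hq, maximalIdeal_comap]
    infer_instance

end IsLocalRing

theorem freeOnPuncturedSpectrum_iff_tensorProduct_of_map_maximalIdeal {R S : Type}
    [CommRing R] [CommRing S] [IsLocalRing R] [IsLocalRing S] [Algebra R S]
    [IsLocalHom (algebraMap R S)] [Module.Flat R S]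
    (h : (maximalIdeal R).map (algebraMap R S) = maximalIdeal S)
    (M : Type) [AddCommGroup M] [Module R M] [Module.Finite R M] :
    FreeOnPuncturedSpectrum R M ↔ FreeOnPuncturedSpectrum S (S ⊗[R] M) := by
  have : Module.FaithfullyFlat R S := .of_flat_of_isLocalHom
  have hfree := Module.preimage_comap_freeLocus_of_flat (R := R) (A := S) (M := M)
  have hmax := isMaximal_comap_iff_of_map_maximalIdeal h
  constructor
  · intro hM q hq
    rw [← Module.mem_freeLocus, ← hfree]
    exact hM _ ((hmax q).not.mpr hq)
  · intro hM p hp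
    obtain ⟨q, rfl⟩ := PrimeSpectrum.comap_surjective_of_faithfullyFlat (B := S) p
    have := hM q ((hmax q).not.mp hp)
    rwa [← Module.mem_freeLocus, ← hfree] at this

/-- a finitely generated module `M` over a Noetherian local
ring `R` is free on the punctured spectrum of `R` iff its completion
`M̂ = R̂ ⊗_R M` is free on the punctured spectrum of `R̂`. -/
theorem freeOnPuncturedSpectrum_iff_completion
    (R : Type) [CommRing R] [IsLocalRing R] [IsNoetherianRing R]
    (M : Type) [AddCommGroup M] [Module R M] [Module.Finite R M] :
    FreeOnPuncturedSpectrum R M ↔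
      FreeOnPuncturedSpectrum (AdicCompletion (maximalIdeal R) R)
        (TensorProduct R (AdicCompletion (maximalIdeal R) R) M) :=
  freeOnPuncturedSpectrum_iff_tensorProduct_of_map_maximalIdeal
    AdicCompletion.maximalIdeal_eq_map.symm M

end
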